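/- arXiv:1308.6648 — 6 statements merged into one kernel-verified Lean document; each statement's English description precedes it below -/
import Mathlib

section
/- If F = (X; f₁,…,f_N) is a point-fibred IFS on a compact Hausdorff space X, then the coding map π : I^∞ → X, defined by {π(σ)} = Π(σ) = ⋂_{k≥1} f_{σ₁} ∘ ⋯ ∘ f_{σ_k}(X), is continuous, where I^∞ carries the product topology. -/
open Set Topology Filter

/-! The nested sets `f_{σ|n}(X)` are compact and shrink to the point `π σ`, so one of them lies
in any given neighbourhood of `π σ`. Since `f_{σ|n}(X)` depends only on the first `n` symbols of
`σ`, every `τ` in the cylinder of length `n` around `σ` has `π τ` in that same set. -/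

/-- `seqComp f σ k` is the composition `f_{σ|k} = f_{σ₁} ∘ f_{σ₂} ∘ ⋯ ∘ f_{σ_k}`
(with the sequence `σ` indexed from `0`). -/
def seqComp {X : Type*} {N : ℕ} (f : Fin N → X → X) (σ : ℕ → Fin N) : ℕ → X → X
  | 0 => id
  | k + 1 => seqComp f σ k ∘ f (σ k)

/-- `PiMap f σ = ⋂_{k ≥ 1} f_{σ₁} ∘ ⋯ ∘ f_{σ_k}(X)`. -/
def PiMap {X : Type*} {N : ℕ} (f : Fin N → X → X) (σ : ℕ → Fin N) : Set X :=
  ⋂ k : ℕ, seqComp f σ (k + 1) '' Set.univ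

open PiNat

section

variable {X : Type*} {N : ℕ} (f : Fin N → X → X)

lemma continuous_seqComp [TopologicalSpace X] (hf : ∀ i, Continuous (f i)) (σ : ℕ → Fin N)
    (n : ℕ) : Continuous (seqComp f σ n) := by
  induction n with
  | zero => exact continuous_id
  | succ n ih => exact ih.comp (hf _)

lemma seqComp_eq_of_mem_cylinder {σ τ : ℕ → Fin N} {n : ℕ} (h : τ ∈ cylinder σ n) :
    seqComp f τ n = seqComp f σ n := by
  induction n with
  | zero => rfl
  | succ n ih =>
    change seqComp f τ n ∘ f (τ n) = seqComp f σ n ∘ f (σ n)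
    rw [ih (cylinder_anti σ n.le_succ h), h n n.lt_succ_self]

lemma antitone_range_seqComp (σ : ℕ → Fin N) : Antitone fun n => range (seqComp f σ n) :=
  antitone_nat_of_succ_le fun n => by
    rintro _ ⟨x, rfl⟩
    exact ⟨f (σ n) x, rfl⟩

lemma piMap_subset_range_seqComp (σ : ℕ → Fin N) (n : ℕ) :
    PiMap f σ ⊆ range (seqComp f σ n) := by
  refine (iInter_subset _ n).trans ?_
  rw [image_univ]
  exact antitone_range_seqComp f σ n.le_succ

lemma exists_range_seqComp_subset_of_piMap_eq_singleton [TopologicalSpace X] [CompactSpace X]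
    [T2Space X] (hf : ∀ i, Continuous (f i)) {σ : ℕ → Fin N} {x : X} (hσ : PiMap f σ = {x})
    {U : Set X} (hU : U ∈ 𝓝 x) : ∃ n, range (seqComp f σ n) ⊆ U := by
  refine exists_subset_nhds_of_isCompact (antitone_range_seqComp f σ).directed_ge
    (fun n => isCompact_range (continuous_seqComp f hf σ n)) fun y hy => ?_
  have hyx : y ∈ PiMap f σ := mem_iInter.2 fun k => by
    rw [image_univ]
    exact mem_iInter.1 hy (k + 1)
  rw [hσ, mem_singleton_iff] at hyx
  rwa [hyx]

end

theorem codingMap_continuous_general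
    {X : Type*} [TopologicalSpace X] [CompactSpace X] [T2Space X]
    {N : ℕ} (f : Fin N → X → X) (hf : ∀ i, Continuous (f i))
    (π : (ℕ → Fin N) → X) (hπ : ∀ σ, PiMap f σ = {π σ}) :
    Continuous π := by
  refine continuous_iff_continuousAt.2 fun σ U hU => ?_
  obtain ⟨n, hn⟩ := exists_range_seqComp_subset_of_piMap_eq_singleton f hf (hπ σ) hU
  refine mem_map.2 <| mem_of_superset ((isOpen_cylinder _ σ n).mem_nhds (self_mem_cylinder σ n))
    fun τ hτ => hn ?_
  rw [← seqComp_eq_of_mem_cylinder f hτ]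
  exact piMap_subset_range_seqComp f τ n ((hπ τ).symm ▸ mem_singleton (π τ))

/-- If `F = (X; f₁,…,f_N)` is a point-fibred IFS on a compact Hausdorff
space `X`, then the coding map `π : I^∞ → X`, defined by `{π σ} = Π(σ)`, is continuous
(where `I^∞ = ℕ → Fin N` carries the product topology). -/
theorem codingMap_continuous
    {X : Type*} [TopologicalSpace X] [CompactSpace X] [T2Space X] [Nonempty X]
    {N : ℕ} (f : Fin N → X → X) (hf : ∀ i, Continuous (f i))
    (π : (ℕ → Fin N) → X) (hπ : ∀ σ, PiMap f σ = {π σ}) :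
    Continuous π :=
  codingMap_continuous_general f hf π hπ
end

section
/- If F = (X; f₁,…,f_N) is a point-fibred IFS on a compact Hausdorff space X, then the induced map F : K(X) → K(X), B ↦ ⋃_{i=1}^N f_i(B), has a unique fixed point A ∈ K(X). -/
open Set Topology Filter

/-! Every point of the attractor `⋂ₖ Fᵏ(X)` has an address `σ`, found by compactness of the
code space `(Fin N)^ℕ` (König's lemma), and lies in `Π(σ)`. Conversely, if `B` is a nonempty
compact set with `F(B) ⊆ B`, Cantor's intersection theorem gives a point of
`⋂ₖ f_{σ|k}(B) ⊆ Π(σ) ∩ B`; as `Π(σ)` is a singleton, `Π(σ) ⊆ B`. Hence every fixed point of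
`F` contains and is contained in the attractor. That the attractor is fixed follows from
`Π(σ) = f_{σ₀}(Π(σ₁σ₂⋯))`. -/

namespace IteratedFunctionSystem

variable {X : Type*} {N : ℕ} (f : Fin N → X → X)

def hutchinsonMap (B : Set X) : Set X := ⋃ i, f i '' B

lemma hutchinsonMap_mono : Monotone (hutchinsonMap f) :=
  fun _ _ h => iUnion_mono fun _ => image_mono h

lemma seqComp_succ (σ : ℕ → Fin N) (k : ℕ) :
    seqComp f σ (k + 1) = seqComp f σ k ∘ f (σ k) :=
  rfl

lemma seqComp_congr {σ τ : ℕ → Fin N} (k : ℕ) (h : ∀ i < k, σ i = τ i) :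
    seqComp f σ k = seqComp f τ k := by
  induction k with
  | zero => rfl
  | succ k ih =>
    rw [seqComp_succ, seqComp_succ, ih fun i hi => h i (by omega), h k k.lt_succ_self]

lemma seqComp_succ_eq_comp_tail (σ : ℕ → Fin N) (k : ℕ) :
    seqComp f σ (k + 1) = f (σ 0) ∘ seqComp f (fun n => σ (n + 1)) k := by
  induction k with
  | zero => rfl
  | succ k ih => rw [seqComp_succ, ih, seqComp_succ]; rfl

lemma iterate_hutchinsonMap_eq_iUnion [NeZero N] (k : ℕ) (S : Set X) :
    (hutchinsonMap f)^[k] S = ⋃ σ : ℕ → Fin N, seqComp f σ k '' S := by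
  induction k generalizing S with
  | zero => simpa [seqComp] using (iUnion_const (ι := ℕ → Fin N) S).symm
  | succ k ih =>
    ext x
    simp only [Function.iterate_succ_apply, ih, hutchinsonMap, image_iUnion, mem_iUnion]
    constructor
    · rintro ⟨σ, i, hx⟩
      refine ⟨Function.update σ k i, ?_⟩
      rwa [seqComp_succ, Function.update_self, image_comp,
        seqComp_congr f k fun j hj => Function.update_of_ne hj.ne _ _]
    · rintro ⟨σ, hx⟩
      exact ⟨σ, σ k, by rwa [seqComp_succ, image_comp] at hx⟩

lemma image_seqComp_subset_iterate [NeZero N] (σ : ℕ → Fin N) (k : ℕ) (S : Set X) :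
    seqComp f σ k '' S ⊆ (hutchinsonMap f)^[k] S := by
  rw [iterate_hutchinsonMap_eq_iUnion]
  exact subset_iUnion (fun τ => seqComp f τ k '' S) σ

lemma image_seqComp_succ_subset {S : Set X} (hS : hutchinsonMap f S ⊆ S)
    (σ : ℕ → Fin N) (k : ℕ) : seqComp f σ (k + 1) '' S ⊆ seqComp f σ k '' S := by
  rw [seqComp_succ, image_comp]
  exact image_mono ((subset_iUnion (fun i => f i '' S) (σ k)).trans hS)

lemma mem_piMap_of_forall_mem_image {S : Set X} {σ : ℕ → Fin N} {x : X}
    (hx : ∀ k, x ∈ seqComp f σ k '' S) : x ∈ PiMap f σ :=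
  mem_iInter.2 fun k => image_mono (subset_univ S) (hx (k + 1))

lemma image_piMap_tail_subset (σ : ℕ → Fin N) :
    f (σ 0) '' PiMap f (fun n => σ (n + 1)) ⊆ PiMap f σ := by
  refine image_subset_iff.2 fun x hx => mem_iInter.2 fun k => ?_
  rw [seqComp_succ_eq_comp_tail, image_comp]
  refine mem_image_of_mem _ ?_
  cases k with
  | zero => exact mem_image_of_mem _ (mem_univ x)
  | succ k => exact mem_iInter.1 hx k

lemma isClosed_setOf_mem_image_seqComp (x : X) (S : Set X) (k : ℕ) :
    IsClosed {σ : ℕ → Fin N | x ∈ seqComp f σ k '' S} := by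
  refine isOpen_compl_iff.1 <| isOpen_iff_forall_mem_open.2 fun σ hσ =>
    ⟨PiNat.cylinder σ k, fun τ hτ => ?_, PiNat.isOpen_cylinder _ σ k,
      PiNat.self_mem_cylinder σ k⟩
  show x ∉ seqComp f τ k '' S
  rwa [seqComp_congr f k (PiNat.mem_cylinder_iff.1 hτ)]

lemma exists_forall_mem_image_seqComp [NeZero N] {S : Set X} (hS : hutchinsonMap f S ⊆ S)
    {x : X} (hx : ∀ k, x ∈ (hutchinsonMap f)^[k] S) :
    ∃ σ : ℕ → Fin N, ∀ k, x ∈ seqComp f σ k '' S := by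
  have hne : ∀ k, {σ : ℕ → Fin N | x ∈ seqComp f σ k '' S}.Nonempty := fun k =>
    mem_iUnion.1 (iterate_hutchinsonMap_eq_iUnion f k S ▸ hx k)
  obtain ⟨σ, hσ⟩ := IsCompact.nonempty_iInter_of_sequence_nonempty_isCompact_isClosed
    (fun k => {σ : ℕ → Fin N | x ∈ seqComp f σ k '' S})
    (fun k σ hσ => image_seqComp_succ_subset f hS σ k hσ) hne
    (isClosed_setOf_mem_image_seqComp f x S 0).isCompact
    (isClosed_setOf_mem_image_seqComp f x S)
  exact ⟨σ, fun k => mem_iInter.1 hσ k⟩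

def attractor : Set X := ⋂ k, (hutchinsonMap f)^[k] univ

lemma piMap_subset_attractor [NeZero N] (σ : ℕ → Fin N) : PiMap f σ ⊆ attractor f := by
  intro x hx
  refine mem_iInter.2 fun k => ?_
  cases k with
  | zero => exact mem_univ x
  | succ k => exact image_seqComp_subset_iterate f σ (k + 1) univ (mem_iInter.1 hx k)

lemma hutchinsonMap_attractor_subset : hutchinsonMap f (attractor f) ⊆ attractor f := by
  refine subset_iInter fun k => ?_
  cases k with
  | zero => exact subset_univ _
  | succ k =>
    rw [Function.iterate_succ_apply']
    exact hutchinsonMap_mono f (iInter_subset _ k)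

lemma attractor_subset_hutchinsonMap [NeZero N]
    (hpf : ∀ σ : ℕ → Fin N, ∃ x : X, PiMap f σ = {x}) :
    attractor f ⊆ hutchinsonMap f (attractor f) := by
  intro x hx
  obtain ⟨σ, hσ⟩ := exists_forall_mem_image_seqComp f (subset_univ _) (mem_iInter.1 hx)
  obtain ⟨p, hp⟩ := hpf σ
  obtain ⟨q, hq⟩ := hpf fun n => σ (n + 1)
  have hqmem : q ∈ PiMap f fun n => σ (n + 1) := hq ▸ mem_singleton q
  have hfq := image_piMap_tail_subset f σ (mem_image_of_mem _ hqmem)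
  have hxmem := mem_piMap_of_forall_mem_image f hσ
  rw [hp, mem_singleton_iff] at hfq hxmem
  exact mem_iUnion.2 ⟨σ 0, q, piMap_subset_attractor f _ hqmem, hfq.trans hxmem.symm⟩

lemma isFixedPt_attractor [NeZero N] (hpf : ∀ σ : ℕ → Fin N, ∃ x : X, PiMap f σ = {x}) :
    Function.IsFixedPt (hutchinsonMap f) (attractor f) :=
  (hutchinsonMap_attractor_subset f).antisymm (attractor_subset_hutchinsonMap f hpf)

lemma continuous_seqComp [TopologicalSpace X] (hf : ∀ i, Continuous (f i)) (σ : ℕ → Fin N)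
    (k : ℕ) : Continuous (seqComp f σ k) := by
  induction k with
  | zero => exact continuous_id
  | succ k ih => exact ih.comp (hf _)

lemma piMap_subset_of_hutchinsonMap_subset [TopologicalSpace X] [T2Space X]
    (hf : ∀ i, Continuous (f i)) {σ : ℕ → Fin N} (hσ : (PiMap f σ).Subsingleton) {B : Set X}
    (hBne : B.Nonempty) (hB : IsCompact B) (hFB : hutchinsonMap f B ⊆ B) :
    PiMap f σ ⊆ B := by
  obtain ⟨y, hy⟩ := IsCompact.nonempty_iInter_of_sequence_nonempty_isCompact_isClosed
    (fun k => seqComp f σ k '' B) (image_seqComp_succ_subset f hFB σ) (fun k => hBne.image _)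
    (by simpa [seqComp] using hB) fun k => (hB.image (continuous_seqComp f hf σ k)).isClosed
  have hyB : y ∈ B := by simpa [seqComp] using mem_iInter.1 hy 0
  intro x hx
  rwa [hσ hx (mem_piMap_of_forall_mem_image f (mem_iInter.1 hy))]

lemma subset_of_isFixedPt [TopologicalSpace X] [T2Space X] [NeZero N]
    (hf : ∀ i, Continuous (f i)) (hpf : ∀ σ : ℕ → Fin N, (PiMap f σ).Subsingleton) {B B' : Set X}
    (hB : Function.IsFixedPt (hutchinsonMap f) B) (hB'ne : B'.Nonempty) (hB' : IsCompact B')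
    (hFB' : hutchinsonMap f B' ⊆ B') : B ⊆ B' := by
  intro x hx
  obtain ⟨σ, hσ⟩ := exists_forall_mem_image_seqComp f hB.le
    fun k => (hB.iterate k).symm ▸ hx
  exact piMap_subset_of_hutchinsonMap_subset f hf (hpf σ) hB'ne hB' hFB'
    (mem_piMap_of_forall_mem_image f hσ)

lemma isCompact_attractor [TopologicalSpace X] [CompactSpace X] [T2Space X]
    (hf : ∀ i, Continuous (f i)) : IsCompact (attractor f) := by
  have hK : ∀ k, IsCompact ((hutchinsonMap f)^[k] univ) := fun k => by
    induction k with
    | zero => exact isCompact_univ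
    | succ k ih =>
      rw [Function.iterate_succ_apply']
      exact isCompact_iUnion fun i => ih.image (hf i)
  exact (isClosed_iInter fun k => (hK k).isClosed).isCompact

end IteratedFunctionSystem

open IteratedFunctionSystem in
theorem hutchinson_existsUnique_fixedPoint_general
    {X : Type*} [TopologicalSpace X] [CompactSpace X] [T2Space X]
    {N : ℕ} (hN : 0 < N) (f : Fin N → X → X) (hf : ∀ i, Continuous (f i))
    (hpf : ∀ σ : ℕ → Fin N, ∃ x : X, PiMap f σ = {x}) :
    ∃! A : Set X, (A.Nonempty ∧ IsCompact A) ∧ (⋃ i, f i '' A) = A := by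
  have : NeZero N := ⟨hN.ne'⟩
  have hsub : ∀ σ, (PiMap f σ).Subsingleton := fun σ => by
    obtain ⟨x, hx⟩ := hpf σ
    exact hx ▸ subsingleton_singleton
  obtain ⟨p, hp⟩ := hpf fun _ => 0
  have hAne : (attractor f).Nonempty := ⟨p, piMap_subset_attractor f _ (hp ▸ mem_singleton p)⟩
  have hA := isCompact_attractor f hf
  have hAfix := isFixedPt_attractor f hpf
  refine ⟨attractor f, ⟨⟨hAne, hA⟩, hAfix⟩, fun B ⟨⟨hBne, hB⟩, hBfix⟩ => ?_⟩
  exact (subset_of_isFixedPt f hf hsub hBfix hAne hA hAfix.le).antisymm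
    (subset_of_isFixedPt f hf hsub hAfix hBne hB hBfix.le)

/-- If `F` is a point-fibred IFS on a compact Hausdorff space `X`, then
the induced map `B ↦ ⋃ᵢ fᵢ(B)` on the nonempty compact subsets of `X` has a unique
fixed point. -/
theorem hutchinson_existsUnique_fixedPoint
    {X : Type*} [TopologicalSpace X] [CompactSpace X] [T2Space X] [Nonempty X]
    {N : ℕ} (hN : 0 < N) (f : Fin N → X → X) (hf : ∀ i, Continuous (f i))
    (hpf : ∀ σ : ℕ → Fin N, ∃ x : X, PiMap f σ = {x}) :
    ∃! A : Set X, (A.Nonempty ∧ IsCompact A) ∧ (⋃ i, f i '' A) = A :=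
  hutchinson_existsUnique_fixedPoint_general hN f hf hpf
end

section
/- Let F be a point-fibred IFS on a compact Hausdorff space X with attractor A and coding map π, and let τ : A → Ω be a section of π. If A is connected and A is not a singleton, then τ : A → Ω is not continuous. -/
/-! The code space `I^∞` is totally disconnected, and a section of `π` is injective; a continuous
injective map from a connected space into a totally disconnected one collapses the space to a
point. -/

open Set Topology Filter

theorem PreconnectedSpace.subsingleton_of_continuous_injective {α β : Type*}
    [TopologicalSpace α] [TopologicalSpace β] [PreconnectedSpace α] [TotallyDisconnectedSpace β]
    {g : α → β} (hg : Continuous g) (hinj : Function.Injective g) : Subsingleton α :=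
  ⟨fun i j => hinj (TotallyDisconnectedSpace.eq_of_continuous g hg i j)⟩

theorem section_not_continuous_of_connected_general
    {X : Type*} [TopologicalSpace X]
    {N : ℕ}
    (π : (ℕ → Fin N) → X)
    -- `Ω` is an address space for `F` (here `A = Set.range π` is the attractor):
    (Ω : Set (ℕ → Fin N))
    -- `τ : A → Ω` is the corresponding section, i.e. `τ = (π|_Ω)⁻¹`:
    (τ : Set.range π → Ω) (hτ : ∀ x : Set.range π, π (τ x) = (x : X))
    (hconn : IsConnected (Set.range π))
    (hnotsingle : ¬ ∃ x : X, Set.range π = {x}) :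
    ¬ Continuous τ := by
  intro hcont
  have : ConnectedSpace (Set.range π) := Subtype.connectedSpace hconn
  have hsub : (Set.range π).Subsingleton := Set.subsingleton_coe _ |>.mp <|
    PreconnectedSpace.subsingleton_of_continuous_injective hcont
      (Function.LeftInverse.injective (g := fun σ => ⟨π σ, mem_range_self _⟩)
        fun x => Subtype.ext (hτ x))
  obtain ⟨a, ha⟩ := hconn.nonempty
  exact hnotsingle ⟨a, hsub.eq_singleton_of_mem ha⟩

/-- Let `F` be a point-fibred IFS on a compact Hausdorff space `X` with
attractor `A = π(I^∞)` and coding map `π`, and let `τ : A → Ω` be a section of `π`.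
If `A` is connected and not a singleton, then `τ` is not continuous. -/
theorem section_not_continuous_of_connected
    {X : Type*} [TopologicalSpace X] [CompactSpace X] [T2Space X] [Nonempty X]
    {N : ℕ} (f : Fin N → X → X) (hf : ∀ i, Continuous (f i))
    (π : (ℕ → Fin N) → X) (hπ : ∀ σ, PiMap f σ = {π σ})
    -- `Ω` is an address space for `F` (here `A = Set.range π` is the attractor):
    (Ω : Set (ℕ → Fin N)) (hΩ : π '' Ω = Set.range π) (hinj : Set.InjOn π Ω)
    -- `τ : A → Ω` is the corresponding section, i.e. `τ = (π|_Ω)⁻¹`: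
    (τ : Set.range π → Ω) (hτ : ∀ x : Set.range π, π (τ x) = (x : X))
    (hconn : IsConnected (Set.range π))
    (hnotsingle : ¬ ∃ x : X, Set.range π = {x}) :
    ¬ Continuous τ :=
  section_not_continuous_of_connected_general π Ω τ hτ hconn hnotsingle
end

section
/- Let F be an injective point-fibred IFS on a compact Hausdorff space with attractor A, let M = {M_i : i ∈ I} be a mask for F with associated masked dynamical system T : A → A, and for each x ∈ A let σ(x) = σ₁(x)σ₂(x)σ₃(x)… ∈ I^∞ be the itinerary of x, where σ_k(x) ∈ I is the unique symbol with T^{k-1}(x) ∈ M_{σ_k(x)}. Then Ω_M := {σ(x) : x ∈ A} is an address space for F; that is, π(Ω_M) = A and π restricted to Ω_M is one-to-one (in fact π(σ(x)) = x for every x ∈ A). -/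
/-! Running the masked system backwards reconstructs `x`: since `f_{σ_k(x)}` undoes the `k`-th
step of `T`, we get `f_{σ|k}(T^k x) = x`, so `x` lies in every `f_{σ|k}(X)` and hence is the
unique point `π(σ(x))` of their intersection. Thus `π` is a left inverse of the itinerary map on
`A`, which gives both claims. -/

open Set Topology Filter

section

variable {X : Type*} {N : ℕ} {f : Fin N → X → X} {σ : ℕ → Fin N} {T : X → X} {x : X}

theorem seqComp_apply_iterate (h : ∀ k, f (σ k) (T (T^[k] x)) = T^[k] x) (k : ℕ) :
    seqComp f σ k (T^[k] x) = x := by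
  induction k with
  | zero => rfl
  | succ k ih =>
    rw [Function.iterate_succ_apply', seqComp, Function.comp_apply, h k, ih]

theorem mem_piMap_of_apply_iterate (h : ∀ k, f (σ k) (T (T^[k] x)) = T^[k] x) :
    x ∈ PiMap f σ :=
  mem_iInter.2 fun k => ⟨T^[k + 1] x, mem_univ _, seqComp_apply_iterate h (k + 1)⟩

end

theorem maskedAddressSpace_isAddressSpace_general
    {X : Type*}
    {N : ℕ} (f : Fin N → X → X)
    (π : (ℕ → Fin N) → X) (hπ : ∀ σ, PiMap f σ = {π σ})
    -- `M` is a mask for `F` (the attractor is `A = Set.range π`):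
    (M : Fin N → Set X)
    -- `T` is the associated masked dynamical system, i.e. `T x = fᵢ⁻¹ x` on `Mᵢ`:
    (T : X → X) (hT : ∀ i, ∀ x ∈ M i, f i (T x) = x)
    -- `sym x` is the itinerary of `x ∈ A` under `T`:
    (sym : X → ℕ → Fin N)
    (hsym : ∀ x ∈ Set.range π, ∀ k : ℕ, T^[k] x ∈ M (sym x k)) :
    π '' (sym '' Set.range π) = Set.range π ∧
      Set.InjOn π (sym '' Set.range π) ∧
      ∀ x ∈ Set.range π, π (sym x) = x := by
  have hinv : LeftInvOn π sym (range π) := fun x hx => by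
    have hmem := mem_piMap_of_apply_iterate fun k => hT _ _ (hsym x hx k)
    rw [hπ] at hmem
    exact hmem.symm
  exact ⟨hinv.image_image, LeftInvOn.injOn hinv.rightInvOn_image, hinv⟩

/-- Let `F` be an injective point-fibred IFS on a compact Hausdorff
space with attractor `A = range π`, let `M = {Mᵢ}` be a mask for `F` with masked
dynamical system `T` (so `T x = fᵢ⁻¹ x` for `x ∈ Mᵢ`), and for `x ∈ A` let `sym x` be
the itinerary of `x` (so `T^[k] x ∈ M (sym x k)` for all `k`). Then
`Ω_M = {sym x : x ∈ A}` is an address space for `F`: `π(Ω_M) = A`, `π` is one-to-one on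
`Ω_M`, and in fact `π (sym x) = x` for every `x ∈ A`. -/
theorem maskedAddressSpace_isAddressSpace
    {X : Type*} [TopologicalSpace X] [CompactSpace X] [T2Space X] [Nonempty X]
    {N : ℕ} (f : Fin N → X → X) (hf : ∀ i, Continuous (f i))
    (hfinj : ∀ i, Function.Injective (f i))
    (π : (ℕ → Fin N) → X) (hπ : ∀ σ, PiMap f σ = {π σ})
    -- `M` is a mask for `F` (the attractor is `A = Set.range π`):
    (M : Fin N → Set X)
    (hM₁ : ∀ i, M i ⊆ f i '' Set.range π)
    (hM₂ : ∀ i j, i ≠ j → M i ∩ M j = ∅)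
    (hM₃ : ⋃ i, M i = Set.range π)
    -- `T` is the associated masked dynamical system, i.e. `T x = fᵢ⁻¹ x` on `Mᵢ`:
    (T : X → X) (hT : ∀ i, ∀ x ∈ M i, f i (T x) = x)
    -- `sym x` is the itinerary of `x ∈ A` under `T`:
    (sym : X → ℕ → Fin N)
    (hsym : ∀ x ∈ Set.range π, ∀ k : ℕ, T^[k] x ∈ M (sym x k)) :
    π '' (sym '' Set.range π) = Set.range π ∧
      Set.InjOn π (sym '' Set.range π) ∧
      ∀ x ∈ Set.range π, π (sym x) = x :=
  maskedAddressSpace_isAddressSpace_general f π hπ M T hT sym hsym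
end

section
/- Let F be an injective point-fibred IFS on a compact Hausdorff space with attractor A, mask M = {M_i : i ∈ I}, masked dynamical system T, masked address space Ω_M, and masked section τ : A → Ω_M. Then the shift map S : σ₁σ₂σ₃… ↦ σ₂σ₃σ₄… maps Ω_M into Ω_M (so S is a well-defined self-map of Ω_M), and the diagram commutes: τ ∘ T = S ∘ τ on A, equivalently T ∘ (π|_{Ω_M}) = (π|_{Ω_M}) ∘ S on Ω_M. -/
open Set Topology Filter

/-!
A point `x` of the attractor is recovered from its itinerary `σ = sym x` by
`x = f_{σ|k} (T^k x)`, so `x` lies in every cylinder image `f_{σ|k}(X)` and point-fibredness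
gives `x = π σ`. Since `T x` is again in the attractor and its itinerary is the shift of that
of `x` (the mask pieces are disjoint), both the invariance of `Ω_M` and the two commuting
squares follow.
-/

theorem index_eq_of_mem_of_mem {ι X : Type*} {M : ι → Set X}
    (hM : ∀ i j, i ≠ j → M i ∩ M j = ∅) {i j : ι} {x : X}
    (hi : x ∈ M i) (hj : x ∈ M j) :
    i = j := by
  by_contra hij
  exact (hM i j hij).subset ⟨hi, hj⟩

theorem apply_mem_of_mem_mask {ι X : Type*} {f : ι → X → X}
    (hfinj : ∀ i, Function.Injective (f i))
    {A : Set X} {M : ι → Set X} (hM : ∀ i, M i ⊆ f i '' A) {T : X → X}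
    (hT : ∀ i, ∀ x ∈ M i, f i (T x) = x) {i : ι} {x : X} (hx : x ∈ M i) : T x ∈ A := by
  obtain ⟨a, ha, rfl⟩ := hM i hx
  rwa [hfinj i (hT i _ hx)]

theorem seqComp_iterate_eq {X : Type*} {N : ℕ} {f : Fin N → X → X} {σ : ℕ → Fin N}
    {T : X → X} {x : X} (h : ∀ k, f (σ k) (T^[k + 1] x) = T^[k] x) (k : ℕ) :
    seqComp f σ k (T^[k] x) = x := by
  induction k with
  | zero => rfl
  | succ k ih => simp only [seqComp, Function.comp_apply, h k, ih]

theorem eq_of_forall_mem_range_seqComp {X : Type*} {N : ℕ} {f : Fin N → X → X}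
    {π : (ℕ → Fin N) → X} (hπ : ∀ σ, PiMap f σ = {π σ}) {σ : ℕ → Fin N} {x : X}
    (hx : ∀ k, x ∈ range (seqComp f σ (k + 1))) : x = π σ := by
  have hmem : x ∈ PiMap f σ := mem_iInter.2 fun k => by simpa only [image_univ] using hx k
  rwa [hπ, mem_singleton_iff] at hmem

theorem shift_mapsTo_maskedAddressSpace_general
    {X : Type*}
    {N : ℕ} (f : Fin N → X → X)
    (hfinj : ∀ i, Function.Injective (f i))
    (π : (ℕ → Fin N) → X) (hπ : ∀ σ, PiMap f σ = {π σ})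
    -- `M` is a mask for `F` (the attractor is `A = Set.range π`):
    (M : Fin N → Set X)
    (hM₁ : ∀ i, M i ⊆ f i '' Set.range π)
    (hM₂ : ∀ i j, i ≠ j → M i ∩ M j = ∅)
    -- `T` is the associated masked dynamical system, i.e. `T x = fᵢ⁻¹ x` on `Mᵢ`:
    (T : X → X) (hT : ∀ i, ∀ x ∈ M i, f i (T x) = x)
    -- `sym x` is the itinerary of `x ∈ A` under `T` (the masked section `τ`):
    (sym : X → ℕ → Fin N)
    (hsym : ∀ x ∈ Set.range π, ∀ k : ℕ, T^[k] x ∈ M (sym x k)) :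
    Set.MapsTo (fun (σ : ℕ → Fin N) (n : ℕ) => σ (n + 1))
        (sym '' Set.range π) (sym '' Set.range π) ∧
      (∀ x ∈ Set.range π, sym (T x) = fun n => sym x (n + 1)) ∧
      (∀ σ ∈ sym '' Set.range π, T (π σ) = π (fun n => σ (n + 1))) := by
  have hTA : ∀ x ∈ range π, T x ∈ range π := fun x hx =>
    apply_mem_of_mem_mask hfinj hM₁ hT (hsym x hx 0)
  have hshift : ∀ x ∈ range π, sym (T x) = fun n => sym x (n + 1) := fun x hx =>
    funext fun n => index_eq_of_mem_of_mem hM₂ (hsym (T x) (hTA x hx) n)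
      (Function.iterate_succ_apply T n x ▸ hsym x hx (n + 1))
  have hcode : ∀ x ∈ range π, x = π (sym x) := fun x hx =>
    eq_of_forall_mem_range_seqComp hπ fun k => ⟨_, seqComp_iterate_eq (fun j => by
      rw [Function.iterate_succ_apply']; exact hT _ _ (hsym x hx j)) (k + 1)⟩
  refine ⟨?_, hshift, ?_⟩
  · rintro _ ⟨x, hx, rfl⟩
    exact ⟨T x, hTA x hx, hshift x hx⟩
  · rintro _ ⟨x, hx, rfl⟩
    rw [← hcode x hx, ← hshift x hx, ← hcode (T x) (hTA x hx)]

/-- Let `F` be an injective point-fibred IFS on a compact Hausdorff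
space with attractor `A = range π`, mask `M`, masked dynamical system `T`, masked address
space `Ω_M = sym '' A`, and masked section `τ = sym`. Then the shift map
`S : σ₁σ₂σ₃… ↦ σ₂σ₃σ₄…` maps `Ω_M` into `Ω_M`, and the diagram commutes:
`τ ∘ T = S ∘ τ` on `A`, equivalently `T ∘ (π|_{Ω_M}) = (π|_{Ω_M}) ∘ S` on `Ω_M`. -/
theorem shift_mapsTo_maskedAddressSpace
    {X : Type*} [TopologicalSpace X] [CompactSpace X] [T2Space X] [Nonempty X]
    {N : ℕ} (f : Fin N → X → X) (hf : ∀ i, Continuous (f i))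
    (hfinj : ∀ i, Function.Injective (f i))
    (π : (ℕ → Fin N) → X) (hπ : ∀ σ, PiMap f σ = {π σ})
    -- `M` is a mask for `F` (the attractor is `A = Set.range π`):
    (M : Fin N → Set X)
    (hM₁ : ∀ i, M i ⊆ f i '' Set.range π)
    (hM₂ : ∀ i j, i ≠ j → M i ∩ M j = ∅)
    (hM₃ : ⋃ i, M i = Set.range π)
    -- `T` is the associated masked dynamical system, i.e. `T x = fᵢ⁻¹ x` on `Mᵢ`:
    (T : X → X) (hT : ∀ i, ∀ x ∈ M i, f i (T x) = x)
    -- `sym x` is the itinerary of `x ∈ A` under `T` (the masked section `τ`):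
    (sym : X → ℕ → Fin N)
    (hsym : ∀ x ∈ Set.range π, ∀ k : ℕ, T^[k] x ∈ M (sym x k)) :
    Set.MapsTo (fun (σ : ℕ → Fin N) (n : ℕ) => σ (n + 1))
        (sym '' Set.range π) (sym '' Set.range π) ∧
      (∀ x ∈ Set.range π, sym (T x) = fun n => sym x (n + 1)) ∧
      (∀ σ ∈ sym '' Set.range π, T (π σ) = π (fun n => σ (n + 1))) :=
  shift_mapsTo_maskedAddressSpace_general f hfinj π hπ M hM₁ hM₂ T hT sym hsym
end

section
/- Let F be an injective point-fibred IFS on a compact Hausdorff space with attractor A, mask M = {M_i : i ∈ I}, masked address space Ω_M, and let S denote the shift map on I^∞. If there exists an index i ∈ I such that M_i = f_i(A), then S(Ω_M) = Ω_M; that is, the shift maps the masked address space onto itself. -/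
/-!
Reading one symbol off an itinerary corresponds to applying `T`, so `S(sym x) = sym (T x)`;
since `T` maps the attractor `A` into itself this gives `S(Ω_M) ⊆ Ω_M`. Conversely, if
`Mᵢ = fᵢ(A)` then for every `x ∈ A` the point `fᵢ x` lies in `Mᵢ` and `T (fᵢ x) = x` by
injectivity of `fᵢ`, so `sym x = S(sym (fᵢ x))`.
-/

open Set Topology Filter

open Function

section MaskedDynamics

variable {X ι : Type*} {f : ι → X → X} {A : Set X} {M : ι → Set X} {T : X → X}

lemma mask_index_unique (hM₂ : ∀ i j, i ≠ j → M i ∩ M j = ∅) {i j : ι} {x : X}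
    (hi : x ∈ M i) (hj : x ∈ M j) : i = j := by
  by_contra hij
  simpa [hM₂ i j hij] using mem_inter hi hj

lemma maskedMap_apply_of_mem (hfinj : ∀ i, Injective (f i))
    (hT : ∀ i, ∀ x ∈ M i, f i (T x) = x) {i : ι} {x : X} (hx : f i x ∈ M i) :
    T (f i x) = x :=
  hfinj i (hT i _ hx)

lemma mapsTo_maskedMap (hfinj : ∀ i, Injective (f i)) (hM₁ : ∀ i, M i ⊆ f i '' A)
    (hM₃ : ⋃ i, M i = A) (hT : ∀ i, ∀ x ∈ M i, f i (T x) = x) : MapsTo T A A := by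
  intro x hx
  obtain ⟨i, hxi⟩ := mem_iUnion.mp (hM₃ ▸ hx)
  obtain ⟨a, ha, rfl⟩ := hM₁ i hxi
  rwa [maskedMap_apply_of_mem hfinj hT hxi]

lemma itinerary_maskedMap (hM₂ : ∀ i j, i ≠ j → M i ∩ M j = ∅) (hTA : MapsTo T A A)
    {sym : X → ℕ → ι} (hsym : ∀ x ∈ A, ∀ k : ℕ, T^[k] x ∈ M (sym x k)) {x : X}
    (hx : x ∈ A) : sym (T x) = fun n => sym x (n + 1) := by
  funext k
  have hk := hsym x hx (k + 1)
  rw [iterate_succ_apply] at hk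
  exact mask_index_unique hM₂ (hsym (T x) (hTA hx) k) hk

end MaskedDynamics

theorem shift_image_maskedAddressSpace_eq_general
    {X : Type*}
    {N : ℕ} (f : Fin N → X → X)
    (hfinj : ∀ i, Function.Injective (f i))
    (π : (ℕ → Fin N) → X)
    -- `M` is a mask for `F` (the attractor is `A = Set.range π`):
    (M : Fin N → Set X)
    (hM₁ : ∀ i, M i ⊆ f i '' Set.range π)
    (hM₂ : ∀ i j, i ≠ j → M i ∩ M j = ∅)
    (hM₃ : ⋃ i, M i = Set.range π)
    -- `T` is the associated masked dynamical system, i.e. `T x = fᵢ⁻¹ x` on `Mᵢ`: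
    (T : X → X) (hT : ∀ i, ∀ x ∈ M i, f i (T x) = x)
    -- `sym x` is the itinerary of `x ∈ A` under `T`:
    (sym : X → ℕ → Fin N)
    (hsym : ∀ x ∈ Set.range π, ∀ k : ℕ, T^[k] x ∈ M (sym x k))
    (hfull : ∃ i, M i = f i '' Set.range π) :
    (fun (σ : ℕ → Fin N) (n : ℕ) => σ (n + 1)) '' (sym '' Set.range π) =
      sym '' Set.range π := by
  have hTA : MapsTo T (range π) (range π) := mapsTo_maskedMap hfinj hM₁ hM₃ hT
  refine Subset.antisymm ?_ ?_
  · rintro _ ⟨_, ⟨x, hx, rfl⟩, rfl⟩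
    exact ⟨T x, hTA hx, itinerary_maskedMap hM₂ hTA hsym hx⟩
  · rintro _ ⟨x, hx, rfl⟩
    obtain ⟨i, hi⟩ := hfull
    have hfx : f i x ∈ M i := hi ▸ mem_image_of_mem (f i) hx
    have hfxA : f i x ∈ range π := hM₃ ▸ mem_iUnion_of_mem i hfx
    refine ⟨sym (f i x), mem_image_of_mem sym hfxA, ?_⟩
    simp only [← itinerary_maskedMap hM₂ hTA hsym hfxA, maskedMap_apply_of_mem hfinj hT hfx]

/-- Let `F` be an injective point-fibred IFS on a compact Hausdorff
space with attractor `A = range π`, mask `M`, masked dynamical system `T`, and masked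
address space `Ω_M = sym '' A`. If there is an index `i` with `Mᵢ = fᵢ(A)`, then the
shift map `S : σ₁σ₂σ₃… ↦ σ₂σ₃σ₄…` maps `Ω_M` onto itself: `S(Ω_M) = Ω_M`. -/
theorem shift_image_maskedAddressSpace_eq
    {X : Type*} [TopologicalSpace X] [CompactSpace X] [T2Space X] [Nonempty X]
    {N : ℕ} (f : Fin N → X → X) (hf : ∀ i, Continuous (f i))
    (hfinj : ∀ i, Function.Injective (f i))
    (π : (ℕ → Fin N) → X) (hπ : ∀ σ, PiMap f σ = {π σ})
    -- `M` is a mask for `F` (the attractor is `A = Set.range π`):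
    (M : Fin N → Set X)
    (hM₁ : ∀ i, M i ⊆ f i '' Set.range π)
    (hM₂ : ∀ i j, i ≠ j → M i ∩ M j = ∅)
    (hM₃ : ⋃ i, M i = Set.range π)
    -- `T` is the associated masked dynamical system, i.e. `T x = fᵢ⁻¹ x` on `Mᵢ`:
    (T : X → X) (hT : ∀ i, ∀ x ∈ M i, f i (T x) = x)
    -- `sym x` is the itinerary of `x ∈ A` under `T`:
    (sym : X → ℕ → Fin N)
    (hsym : ∀ x ∈ Set.range π, ∀ k : ℕ, T^[k] x ∈ M (sym x k))
    (hfull : ∃ i, M i = f i '' Set.range π) :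
    (fun (σ : ℕ → Fin N) (n : ℕ) => σ (n + 1)) '' (sym '' Set.range π) =
      sym '' Set.range π :=
  shift_image_maskedAddressSpace_eq_general f hfinj π M hM₁ hM₂ hM₃ T hT sym hsym hfull
end
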